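/- Let Ψ = ∑ᵢ |i⟩⟨i| ⊗ Mᵢ and Φ = ∑ᵢ |i⟩⟨i| ⊗ M'ᵢ be subnormalized classical-quantum states (the Mᵢ, M'ᵢ positive semidefinite, with ∑ᵢ Tr Mᵢ ≤ 1 and ∑ᵢ Tr M'ᵢ ≤ 1) satisfying (1/2)‖Ψ − Φ‖₁ ≤ ε. Then their canonical duplicate states Ψ' = ∑ᵢ |i⟩⟨i| ⊗ |i⟩⟨i| ⊗ vec(√Mᵢ)vec(√Mᵢ)* and Φ' = ∑ᵢ |i⟩⟨i| ⊗ |i⟩⟨i| ⊗ vec(√M'ᵢ)vec(√M'ᵢ)* satisfy (1/2)‖Ψ' − Φ'‖₁ ≤ √(2ε). -/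

import Mathlib

/-!
Both states are block diagonal along the classical register, so each trace distance splits
into a sum over `i`. Block by block, `‖vec √Mᵢ - vec √M'ᵢ‖² = ‖√Mᵢ - √M'ᵢ‖₂² ≤ ‖Mᵢ - M'ᵢ‖₁`
(Powers–Størmer) and `‖ψψ* - φφ*‖₁ ≤ (‖ψ‖ + ‖φ‖) ‖ψ - φ‖`; Cauchy–Schwarz over `i`, with
`∑ ‖vec √Mᵢ‖² = ∑ Tr Mᵢ ≤ 1`, then gives `√(2ε)`. Both trace-norm estimates come from
`Re Tr (U H) ≤ ‖H‖₁` for unitary `U` and Hermitian `H`, with equality at `U = sign H`.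
-/

open Matrix
open scoped ComplexOrder Kronecker

namespace Matrix.PosSemidef

/-- The positive semidefinite square root of a positive semidefinite matrix
(the definition of the older Mathlib, removed since). -/
noncomputable def sqrt {n 𝕜 : Type*} [Fintype n] [DecidableEq n] [RCLike 𝕜]
    {A : Matrix n n 𝕜} (hA : A.PosSemidef) : Matrix n n 𝕜 :=
  hA.1.eigenvectorUnitary.1 * diagonal ((↑) ∘ (√·) ∘ hA.1.eigenvalues) *
  (star hA.1.eigenvectorUnitary : Matrix n n 𝕜)

end Matrix.PosSemidef

/-- The trace (nuclear) norm of a complex matrix: the trace of `√(AᴴA)`. -/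
noncomputable def traceNorm {n : Type*} [Fintype n] [DecidableEq n]
    (A : Matrix n n ℂ) : ℝ :=
  ((Matrix.posSemidef_conjTranspose_mul_self A).sqrt.trace).re

/-- `vec X` of a matrix `X = ∑ x_{jk} |j⟩⟨k|` is the vector `∑ x_{jk} |j⟩⊗|k⟩`. -/
def vec {n : Type*} (X : Matrix n n ℂ) : n × n → ℂ := fun p => X p.1 p.2

/-- The rank-one outer product `v v*` of a vector. -/
def outer {ι : Type*} (v : ι → ℂ) : Matrix ι ι ℂ := Matrix.vecMulVec v (star v)

open WithLp
open scoped MatrixOrder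

namespace Matrix.PosSemidef

variable {n 𝕜 : Type*} [Fintype n] [DecidableEq n] [RCLike 𝕜] {A : Matrix n n 𝕜}

lemma sqrt_eq_cfcSqrt (hA : A.PosSemidef) : hA.sqrt = CFC.sqrt A := by
  rw [CFC.sqrt_eq_real_sqrt A hA.nonneg, cfcₙ_eq_cfc, hA.1.cfc_eq, IsHermitian.cfc,
    Unitary.conjStarAlgAut_apply]
  rfl

lemma posSemidef_sqrt (hA : A.PosSemidef) : hA.sqrt.PosSemidef := by
  rw [sqrt_eq_cfcSqrt]
  exact (CFC.sqrt_nonneg A).posSemidef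

lemma sqrt_mul_sqrt (hA : A.PosSemidef) : hA.sqrt * hA.sqrt = A := by
  rw [sqrt_eq_cfcSqrt]
  exact CFC.sqrt_mul_sqrt_self A hA.nonneg

end Matrix.PosSemidef

section EuclideanNorm

variable {ι : Type*} [Fintype ι]

lemma norm_toLp_sq (v : ι → ℂ) : ‖toLp 2 v‖ ^ 2 = (star v ⬝ᵥ v).re := by
  rw [← dotProduct_comm, ← EuclideanSpace.inner_toLp_toLp, inner_self_eq_norm_sq_to_K]
  norm_cast

lemma norm_dotProduct_star_le (u v : ι → ℂ) :
    ‖u ⬝ᵥ star v‖ ≤ ‖toLp 2 u‖ * ‖toLp 2 v‖ := by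
  rw [← EuclideanSpace.inner_toLp_toLp, mul_comm]
  exact norm_inner_le_norm _ _

lemma norm_toLp_mulVec_of_mem_unitaryGroup [DecidableEq ι] {U : Matrix ι ι ℂ}
    (hU : U ∈ unitaryGroup ι ℂ) (v : ι → ℂ) : ‖toLp 2 (U *ᵥ v)‖ = ‖toLp 2 v‖ := by
  refine (sq_eq_sq₀ (norm_nonneg _) (norm_nonneg _)).1 ?_
  rw [norm_toLp_sq, norm_toLp_sq, star_mulVec, ← dotProduct_mulVec, mulVec_mulVec,
    ← star_eq_conjTranspose, hU.1, one_mulVec]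

end EuclideanNorm

lemma ite_mul_self_eq_abs (x : ℝ) : (if 0 ≤ x then 1 else -1) * x = |x| := by
  split_ifs with h
  · rw [one_mul, abs_of_nonneg h]
  · rw [neg_one_mul, abs_of_neg (not_le.1 h)]

namespace Matrix

variable {ι : Type*} [Fintype ι] [DecidableEq ι]

lemma trace_mul_diagonal_mul_conjTranspose_mul (V : Matrix ι ι ℂ) (d : ι → ℂ)
    (X : Matrix ι ι ℂ) :
    (V * diagonal d * Vᴴ * X).trace = ∑ i, d i * (star (Vᵀ i) ⬝ᵥ X *ᵥ Vᵀ i) := by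
  rw [Matrix.mul_assoc, Matrix.mul_assoc, trace_mul_comm, Matrix.mul_assoc]
  refine Finset.sum_congr rfl fun i _ => ?_
  rw [diag_apply, diagonal_mul]
  congr 1
  simp only [mul_apply, conjTranspose_apply, dotProduct, mulVec, transpose_apply, Pi.star_apply,
    Finset.sum_mul, Finset.mul_sum]
  rw [Finset.sum_comm]
  simp [mul_assoc]

namespace IsHermitian

variable {H : Matrix ι ι ℂ} (hH : H.IsHermitian)

lemma norm_toLp_eigenvectorBasis (i : ι) : ‖toLp 2 ⇑(hH.eigenvectorBasis i)‖ = 1 := by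
  rw [toLp_ofLp]
  exact hH.eigenvectorBasis.orthonormal.1 i

lemma star_dotProduct_mulVec_eigenvectorBasis (i : ι) :
    star ⇑(hH.eigenvectorBasis i) ⬝ᵥ H *ᵥ ⇑(hH.eigenvectorBasis i) = hH.eigenvalues i := by
  rw [mulVec_eigenvectorBasis, dotProduct_smul, ← dotProduct_comm,
    ← EuclideanSpace.inner_eq_star_dotProduct, inner_self_eq_norm_sq_to_K,
    hH.eigenvectorBasis.orthonormal.1 i]
  simp

lemma trace_mul_eq_sum_eigenvalues_mul (X : Matrix ι ι ℂ) :
    (H * X).trace = ∑ i, (hH.eigenvalues i : ℂ) *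
      (star ⇑(hH.eigenvectorBasis i) ⬝ᵥ X *ᵥ ⇑(hH.eigenvectorBasis i)) := by
  conv_lhs => rw [hH.spectral_theorem, Unitary.conjStarAlgAut_apply, star_eq_conjTranspose]
  exact trace_mul_diagonal_mul_conjTranspose_mul _ _ X

/-- `sign H`, with the convention `sign 0 = 1` that makes it unitary. -/
noncomputable def signUnitary : Matrix ι ι ℂ :=
  (hH.eigenvectorUnitary : Matrix ι ι ℂ) *
    diagonal (fun i => ((if 0 ≤ hH.eigenvalues i then 1 else -1 : ℝ) : ℂ)) *
    (hH.eigenvectorUnitary : Matrix ι ι ℂ)ᴴ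

lemma signUnitary_mem_unitaryGroup : hH.signUnitary ∈ unitaryGroup ι ℂ := by
  have hS : diagonal (fun i => ((if 0 ≤ hH.eigenvalues i then 1 else -1 : ℝ) : ℂ)) ∈
      unitaryGroup ι ℂ := by
    rw [mem_unitaryGroup_iff, star_eq_conjTranspose, diagonal_conjTranspose,
      diagonal_mul_diagonal, ← diagonal_one]
    congr 1
    funext i
    by_cases h : 0 ≤ hH.eigenvalues i <;> simp [h]
  refine mul_mem (mul_mem hH.eigenvectorUnitary.2 hS) ?_
  rw [← star_eq_conjTranspose]
  exact Unitary.star_mem hH.eigenvectorUnitary.2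

lemma trace_signUnitary_mul (X : Matrix ι ι ℂ) :
    (hH.signUnitary * X).trace = ∑ i, ((if 0 ≤ hH.eigenvalues i then 1 else -1 : ℝ) : ℂ) *
      (star ⇑(hH.eigenvectorBasis i) ⬝ᵥ X *ᵥ ⇑(hH.eigenvectorBasis i)) :=
  trace_mul_diagonal_mul_conjTranspose_mul _ _ X

end IsHermitian
end Matrix

lemma traceNorm_eq_re_trace_abs {ι : Type*} [Fintype ι] [DecidableEq ι] (A : Matrix ι ι ℂ) :
    traceNorm A = (CFC.abs A).trace.re := by
  rw [traceNorm, PosSemidef.sqrt_eq_cfcSqrt, ← star_eq_conjTranspose]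
  rfl

namespace Matrix.IsHermitian

variable {ι : Type*} [Fintype ι] [DecidableEq ι] {H : Matrix ι ι ℂ} (hH : H.IsHermitian)

lemma traceNorm_eq_sum_abs_eigenvalues : traceNorm H = ∑ i, |hH.eigenvalues i| := by
  rw [traceNorm_eq_re_trace_abs, CFC.abs_eq_cfc_norm H hH.isSelfAdjoint, hH.cfc_eq,
    IsHermitian.cfc, Unitary.conjStarAlgAut_apply, trace_mul_cycle, Unitary.coe_star_mul_self,
    Matrix.one_mul, trace_diagonal, Complex.re_sum]
  simp

lemma re_trace_signUnitary_mul_self : (hH.signUnitary * H).trace.re = traceNorm H := by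
  rw [trace_signUnitary_mul, hH.traceNorm_eq_sum_abs_eigenvalues, Complex.re_sum]
  refine Finset.sum_congr rfl fun i _ => ?_
  rw [star_dotProduct_mulVec_eigenvectorBasis, ← Complex.ofReal_mul, Complex.ofReal_re,
    ite_mul_self_eq_abs]

lemma re_trace_mul_le_traceNorm (hH : H.IsHermitian) {U : Matrix ι ι ℂ}
    (hU : U ∈ unitaryGroup ι ℂ) : (U * H).trace.re ≤ traceNorm H := by
  rw [trace_mul_comm, hH.trace_mul_eq_sum_eigenvalues_mul, hH.traceNorm_eq_sum_abs_eigenvalues,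
    Complex.re_sum]
  refine Finset.sum_le_sum fun i _ => ?_
  have hw : ‖star ⇑(hH.eigenvectorBasis i) ⬝ᵥ U *ᵥ ⇑(hH.eigenvectorBasis i)‖ ≤ 1 := by
    rw [dotProduct_comm]
    refine (norm_dotProduct_star_le _ _).trans ?_
    rw [norm_toLp_mulVec_of_mem_unitaryGroup hU, hH.norm_toLp_eigenvectorBasis, one_mul]
  refine (Complex.re_le_norm _).trans ?_
  rw [norm_mul, Complex.norm_real, Real.norm_eq_abs]
  exact mul_le_of_le_one_right (abs_nonneg _) hw

end Matrix.IsHermitian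

lemma outer_sub_outer {ι : Type*} (ψ φ : ι → ℂ) :
    outer ψ - outer φ = vecMulVec ψ (star (ψ - φ)) + vecMulVec (ψ - φ) (star φ) := by
  rw [outer, outer, star_sub, vecMulVec_sub, sub_vecMulVec]
  abel

section RankOne

variable {ι : Type*} [Fintype ι] [DecidableEq ι]

lemma re_trace_mul_vecMulVec_le {U : Matrix ι ι ℂ} (hU : U ∈ unitaryGroup ι ℂ) (u v : ι → ℂ) :
    (U * vecMulVec u (star v)).trace.re ≤ ‖toLp 2 u‖ * ‖toLp 2 v‖ := by
  rw [mul_vecMulVec, trace_vecMulVec, ← norm_toLp_mulVec_of_mem_unitaryGroup hU u]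
  exact (Complex.re_le_norm _).trans (norm_dotProduct_star_le _ _)

lemma traceNorm_outer_sub_outer_le (ψ φ : ι → ℂ) :
    traceNorm (outer ψ - outer φ) ≤ (‖toLp 2 ψ‖ + ‖toLp 2 φ‖) * ‖toLp 2 (ψ - φ)‖ := by
  have hH : (outer ψ - outer φ).IsHermitian :=
    (posSemidef_vecMulVec_self_star ψ).1.sub (posSemidef_vecMulVec_self_star φ).1
  have hS := hH.signUnitary_mem_unitaryGroup
  rw [← hH.re_trace_signUnitary_mul_self]
  set S := hH.signUnitary
  calc (S * (outer ψ - outer φ)).trace.re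
      = (S * vecMulVec ψ (star (ψ - φ))).trace.re
          + (S * vecMulVec (ψ - φ) (star φ)).trace.re := by
        rw [outer_sub_outer, Matrix.mul_add, trace_add, Complex.add_re]
    _ ≤ ‖toLp 2 ψ‖ * ‖toLp 2 (ψ - φ)‖ + ‖toLp 2 (ψ - φ)‖ * ‖toLp 2 φ‖ :=
        add_le_add (re_trace_mul_vecMulVec_le hS _ _) (re_trace_mul_vecMulVec_le hS _ _)
    _ = (‖toLp 2 ψ‖ + ‖toLp 2 φ‖) * ‖toLp 2 (ψ - φ)‖ := by ring

end RankOne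

lemma sum_kronecker_sub_sum_kronecker {κ l m n p : Type*} [Fintype κ] (P : κ → Matrix l m ℂ)
    (X Y : κ → Matrix n p ℂ) : ∑ i, P i ⊗ₖ X i - ∑ i, P i ⊗ₖ Y i = ∑ i, P i ⊗ₖ (X i - Y i) := by
  rw [← Finset.sum_sub_distrib]
  refine Finset.sum_congr rfl fun i _ => ?_
  ext
  simp [mul_sub]

section BlockDiagonal

variable {κ p m : Type*} [Fintype κ] [Fintype p] [Fintype m] {P : κ → Matrix p p ℂ}

lemma sum_kronecker_mul_sum_kronecker (hPP : ∀ i, P i * P i = P i)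
    (hPorth : Pairwise fun i j => P i * P j = 0) (F G : κ → Matrix m m ℂ) :
    (∑ i, P i ⊗ₖ F i) * (∑ i, P i ⊗ₖ G i) = ∑ i, P i ⊗ₖ (F i * G i) := by
  simp_rw [Finset.sum_mul_sum, ← mul_kronecker_mul]
  refine Finset.sum_congr rfl fun i _ => ?_
  rw [Finset.sum_eq_single i (fun j _ hji => by rw [hPorth hji.symm, zero_kronecker])
    (fun hi => absurd (Finset.mem_univ i) hi), hPP]

variable [DecidableEq p] [DecidableEq m]

lemma abs_sum_kronecker (hP : ∀ i, (P i).IsHermitian) (hPP : ∀ i, P i * P i = P i)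
    (hPorth : Pairwise fun i j => P i * P j = 0) (D : κ → Matrix m m ℂ) :
    CFC.abs (∑ i, P i ⊗ₖ D i) = ∑ i, P i ⊗ₖ CFC.abs (D i) := by
  refine CFC.sqrt_unique ?_ ?_
  · rw [sum_kronecker_mul_sum_kronecker hPP hPorth, star_sum]
    simp_rw [star_eq_conjTranspose, conjTranspose_kronecker, (hP _).eq]
    rw [sum_kronecker_mul_sum_kronecker hPP hPorth]
    simp_rw [CFC.abs_mul_abs, star_eq_conjTranspose]
  · refine Finset.sum_nonneg fun i _ => PosSemidef.nonneg ?_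
    have hPpsd := posSemidef_conjTranspose_mul_self (P i)
    rw [(hP i).eq, hPP] at hPpsd
    exact hPpsd.kronecker (CFC.abs_nonneg (D i)).posSemidef

lemma traceNorm_sum_kronecker (hP : ∀ i, (P i).IsHermitian) (hPP : ∀ i, P i * P i = P i)
    (hPorth : Pairwise fun i j => P i * P j = 0) (hPtr : ∀ i, (P i).trace = 1)
    (D : κ → Matrix m m ℂ) :
    traceNorm (∑ i, P i ⊗ₖ D i) = ∑ i, traceNorm (D i) := by
  simp_rw [traceNorm_eq_re_trace_abs, abs_sum_kronecker hP hPP hPorth, trace_sum,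
    trace_kronecker, hPtr, one_mul, Complex.re_sum]

lemma traceNorm_sum_single_kronecker {e : κ → p} (he : Function.Injective e)
    (D : κ → Matrix m m ℂ) :
    traceNorm (∑ i, single (e i) (e i) (1 : ℂ) ⊗ₖ D i) = ∑ i, traceNorm (D i) := by
  refine traceNorm_sum_kronecker (fun i => ?_) (fun i => ?_) (fun i j hij => ?_) (fun i => ?_) D
  · rw [IsHermitian, conjTranspose_single, star_one]
  · rw [single_mul_single_same, one_mul]
  · exact single_mul_single_of_ne _ _ _ _ (he.ne hij) _
  · exact trace_single_eq_same _ _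

end BlockDiagonal

section PowersStormer

variable {ι : Type*} [Fintype ι]

lemma Matrix.IsHermitian.star_dotProduct_mul_add_mul_mulVec {C : Matrix ι ι ℂ}
    (hC : C.IsHermitian) (D : Matrix ι ι ℂ) {w : ι → ℂ} {μ : ℝ} (hw : C *ᵥ w = μ • w) :
    star w ⬝ᵥ (C * D + D * C) *ᵥ w = 2 * μ * (star w ⬝ᵥ D *ᵥ w) := by
  have hwC : star w ᵥ* C = (μ : ℂ) • star w := by
    rw [← hC.eq, ← star_mulVec, hw, star_smul, star_trivial, Complex.coe_smul]
  rw [add_mulVec, dotProduct_add, ← mulVec_mulVec, ← mulVec_mulVec, hw, dotProduct_mulVec, hwC,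
    mulVec_smul, dotProduct_smul, smul_dotProduct, Complex.real_smul, smul_eq_mul]
  ring

lemma abs_re_star_dotProduct_mulVec_le {C D : Matrix ι ι ℂ} (hpos : (D + C).PosSemidef)
    (hneg : (D - C).PosSemidef) (w : ι → ℂ) :
    |(star w ⬝ᵥ C *ᵥ w).re| ≤ (star w ⬝ᵥ D *ᵥ w).re := by
  have h₁ := hpos.re_dotProduct_nonneg w
  have h₂ := hneg.re_dotProduct_nonneg w
  rw [add_mulVec, dotProduct_add] at h₁
  rw [sub_mulVec, dotProduct_sub] at h₂
  simp only [RCLike.re_to_complex, Complex.add_re, Complex.sub_re] at h₁ h₂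
  exact abs_le.2 ⟨by linarith, by linarith⟩

theorem Matrix.PosSemidef.re_trace_sqrt_sub_sqrt_sq_le_traceNorm [DecidableEq ι]
    {A B : Matrix ι ι ℂ} (hA : A.PosSemidef) (hB : B.PosSemidef) :
    ((hA.sqrt - hB.sqrt) * (hA.sqrt - hB.sqrt)).trace.re ≤ traceNorm (A - B) := by
  set C := hA.sqrt - hB.sqrt
  set D := hA.sqrt + hB.sqrt
  have hC : C.IsHermitian := hA.posSemidef_sqrt.1.sub hB.posSemidef_sqrt.1
  have hAB : (A - B) + (A - B) = C * D + D * C := by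
    conv_lhs => rw [← hA.sqrt_mul_sqrt, ← hB.sqrt_mul_sqrt]
    simp only [C, D]
    noncomm_ring
  have hpos : (D + C).PosSemidef := by
    rw [show D + C = hA.sqrt + hA.sqrt by simp only [C, D]; abel]
    exact hA.posSemidef_sqrt.add hA.posSemidef_sqrt
  have hneg : (D - C).PosSemidef := by
    rw [show D - C = hB.sqrt + hB.sqrt by simp only [C, D]; abel]
    exact hB.posSemidef_sqrt.add hB.posSemidef_sqrt
  set μ := hC.eigenvalues
  set w := fun i => ⇑(hC.eigenvectorBasis i)
  have hAB_w (i : ι) : star (w i) ⬝ᵥ (A - B) *ᵥ w i = μ i * (star (w i) ⬝ᵥ D *ᵥ w i) := by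
    have h := hC.star_dotProduct_mul_add_mul_mulVec D (hC.mulVec_eigenvectorBasis i)
    rw [← hAB, add_mulVec, dotProduct_add] at h
    linear_combination h / 2
  have hμ_le (i : ι) : |μ i| ≤ (star (w i) ⬝ᵥ D *ᵥ w i).re := by
    have h := abs_re_star_dotProduct_mulVec_le hpos hneg (w i)
    rwa [hC.star_dotProduct_mulVec_eigenvectorBasis, Complex.ofReal_re] at h
  calc (C * C).trace.re = ∑ i, μ i ^ 2 := by
        rw [hC.trace_mul_eq_sum_eigenvalues_mul, Complex.re_sum]
        refine Finset.sum_congr rfl fun i _ => ?_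
        rw [hC.star_dotProduct_mulVec_eigenvectorBasis, ← Complex.ofReal_mul, Complex.ofReal_re,
          sq]
    _ ≤ ∑ i, ((if 0 ≤ μ i then 1 else -1 : ℝ) * (star (w i) ⬝ᵥ (A - B) *ᵥ w i)).re := by
        refine Finset.sum_le_sum fun i _ => ?_
        rw [hAB_w, ← mul_assoc, ← Complex.ofReal_mul, Complex.re_ofReal_mul, ite_mul_self_eq_abs,
          sq, ← abs_mul_abs_self]
        exact mul_le_mul_of_nonneg_left (hμ_le i) (abs_nonneg _)
    _ = (hC.signUnitary * (A - B)).trace.re := by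
        rw [hC.trace_signUnitary_mul, Complex.re_sum]
    _ ≤ traceNorm (A - B) :=
        (hA.1.sub hB.1).re_trace_mul_le_traceNorm hC.signUnitary_mem_unitaryGroup

end PowersStormer

section Vec

variable {n : Type*} [Fintype n]

lemma norm_toLp_vec_sq (X : Matrix n n ℂ) :
    ‖toLp 2 (_root_.vec X)‖ ^ 2 = (Xᴴ * X).trace.re := by
  rw [norm_toLp_sq]
  simp only [dotProduct, Fintype.sum_prod_type, trace, diag_apply, mul_apply, conjTranspose_apply,
    Pi.star_apply, _root_.vec]
  rw [Finset.sum_comm]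

variable [DecidableEq n]

lemma norm_toLp_vec_sqrt_sq {A : Matrix n n ℂ} (hA : A.PosSemidef) :
    ‖toLp 2 (_root_.vec hA.sqrt)‖ ^ 2 = A.trace.re := by
  rw [norm_toLp_vec_sq, hA.posSemidef_sqrt.1.eq, hA.sqrt_mul_sqrt]

lemma norm_toLp_vec_sqrt_sub_sqrt_sq_le {A B : Matrix n n ℂ} (hA : A.PosSemidef)
    (hB : B.PosSemidef) :
    ‖toLp 2 (_root_.vec hA.sqrt - _root_.vec hB.sqrt)‖ ^ 2 ≤ traceNorm (A - B) := by
  rw [show _root_.vec hA.sqrt - _root_.vec hB.sqrt = _root_.vec (hA.sqrt - hB.sqrt) from rfl,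
    norm_toLp_vec_sq, (hA.posSemidef_sqrt.1.sub hB.posSemidef_sqrt.1).eq]
  exact hA.re_trace_sqrt_sub_sqrt_sq_le_traceNorm hB

end Vec

lemma sum_add_mul_le_two_mul_sqrt {κ : Type*} [Fintype κ] {a b : κ → ℝ}
    (ha : ∑ i, a i ^ 2 ≤ 1) (hb : ∑ i, b i ^ 2 ≤ 1) (c : κ → ℝ) :
    ∑ i, (a i + b i) * c i ≤ 2 * √(∑ i, c i ^ 2) := by
  have hac := Real.sum_mul_le_sqrt_mul_sqrt Finset.univ a c
  have hbc := Real.sum_mul_le_sqrt_mul_sqrt Finset.univ b c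
  have ha' : √(∑ i, a i ^ 2) ≤ 1 := Real.sqrt_le_one.2 ha
  have hb' : √(∑ i, b i ^ 2) ≤ 1 := Real.sqrt_le_one.2 hb
  have hc := Real.sqrt_nonneg (∑ i, c i ^ 2)
  simp_rw [add_mul, Finset.sum_add_distrib]
  nlinarith

theorem duplication_lipschitz_general
    {n k : ℕ}
    (M M' : Fin k → Matrix (Fin n) (Fin n) ℂ)
    (hM : ∀ i, (M i).PosSemidef) (hM' : ∀ i, (M' i).PosSemidef)
    (htr : ∑ i, ((M i).trace).re ≤ 1) (htr' : ∑ i, ((M' i).trace).re ≤ 1)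
    (ε : ℝ)
    (hclose :
      (1 / 2) * traceNorm
        ((∑ i, Matrix.single i i (1 : ℂ) ⊗ₖ M i)
          - ∑ i, Matrix.single i i (1 : ℂ) ⊗ₖ M' i) ≤ ε) :
    (1 / 2) * traceNorm
        ((∑ i, (Matrix.single i i (1 : ℂ) ⊗ₖ Matrix.single i i (1 : ℂ))
            ⊗ₖ outer (_root_.vec (hM i).sqrt))
          - ∑ i, (Matrix.single i i (1 : ℂ) ⊗ₖ Matrix.single i i (1 : ℂ))
            ⊗ₖ outer (_root_.vec (hM' i).sqrt)) ≤ Real.sqrt (2 * ε) := by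
  set ψ := fun i => _root_.vec (hM i).sqrt
  set φ := fun i => _root_.vec (hM' i).sqrt
  rw [sum_kronecker_sub_sum_kronecker,
    traceNorm_sum_single_kronecker (e := fun i => i) fun _ _ h => h] at hclose
  simp_rw [sum_kronecker_sub_sum_kronecker, single_kronecker_single, mul_one]
  rw [traceNorm_sum_single_kronecker (e := fun i => (i, i)) fun _ _ h => congrArg Prod.fst h]
  have hψ : ∑ i, ‖toLp 2 (ψ i)‖ ^ 2 ≤ 1 := by simpa only [ψ, norm_toLp_vec_sqrt_sq] using htr
  have hφ : ∑ i, ‖toLp 2 (φ i)‖ ^ 2 ≤ 1 := by simpa only [φ, norm_toLp_vec_sqrt_sq] using htr'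
  have hψφ : ∑ i, ‖toLp 2 (ψ i - φ i)‖ ^ 2 ≤ 2 * ε := by
    have := Finset.sum_le_sum fun i (_ : i ∈ Finset.univ) =>
      norm_toLp_vec_sqrt_sub_sqrt_sq_le (hM i) (hM' i)
    linarith
  calc (1 / 2) * ∑ i, traceNorm (outer (ψ i) - outer (φ i))
      ≤ (1 / 2) * ∑ i, (‖toLp 2 (ψ i)‖ + ‖toLp 2 (φ i)‖) * ‖toLp 2 (ψ i - φ i)‖ := by
        gcongr with i
        exact traceNorm_outer_sub_outer_le _ _
    _ ≤ (1 / 2) * (2 * √(2 * ε)) := by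
        gcongr
        exact (sum_add_mul_le_two_mul_sqrt hψ hφ _).trans (by gcongr)
    _ = √(2 * ε) := by ring

/-- Proposition 2.6: canonical duplication is `√(2ε)`-Lipschitz in half trace
distance. -/
theorem duplication_lipschitz
    {n k : ℕ}
    (M M' : Fin k → Matrix (Fin n) (Fin n) ℂ)
    (hM : ∀ i, (M i).PosSemidef) (hM' : ∀ i, (M' i).PosSemidef)
    (htr : ∑ i, ((M i).trace).re ≤ 1) (htr' : ∑ i, ((M' i).trace).re ≤ 1)
    (ε : ℝ) (hε : 0 ≤ ε)
    (hclose :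
      (1 / 2) * traceNorm
        ((∑ i, Matrix.single i i (1 : ℂ) ⊗ₖ M i)
          - ∑ i, Matrix.single i i (1 : ℂ) ⊗ₖ M' i) ≤ ε) :
    (1 / 2) * traceNorm
        ((∑ i, (Matrix.single i i (1 : ℂ) ⊗ₖ Matrix.single i i (1 : ℂ))
            ⊗ₖ outer (_root_.vec (hM i).sqrt))
          - ∑ i, (Matrix.single i i (1 : ℂ) ⊗ₖ Matrix.single i i (1 : ℂ))
            ⊗ₖ outer (_root_.vec (hM' i).sqrt)) ≤ Real.sqrt (2 * ε) :=
  duplication_lipschitz_general M M' hM hM' htr htr' ε hclose
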